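/- The [descend-λ] transition of the CK+ machine preserves the decoded term: φ⟨λ.M, R, ⟨arg(N,R',k), K, ...⟩⟩ = φ⟨M, 0::R, ⟨mt, bind(N,R',k), K, ...⟩⟩. -/
import Mathlib


inductive Tm : Type
  | var : Nat → Tm
  | lam : Tm → Tm
  | app : Tm → Tm → Tm
deriving DecidableEq

/-- shift ↑(M, x, m): increment all indices ≥ m by x -/
def shift : Tm → Nat → Nat → Tm
  | .var n, x, m => if n ≥ m then .var (n + x) else .var n
  | .lam M, x, m => .lam (shift M x (m+1))
  | .app M N, x, m => .app (shift M x m) (shift N x m)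

/-- apply a renaming environment R to a term: (R)n = n + R(n) -/
def ren : List Nat → Tm → Tm
  | R, .var n => .var (n + R.getD n 0)
  | R, .lam M => .lam (ren (0 :: R) M)
  | R, .app M N => .app (ren R M) (ren R N)

/-- values are lambda abstractions -/
def IsVal (M : Tm) : Prop := ∃ M', M = Tm.lam M'

/-- CK+ machine frames: partial frames mt, arg, op and complete frames bind.
    A continuation stack is a list of frames, top frame first. -/
inductive Frame : Type
  | mt : Frame
  | arg : Tm → List Nat → Frame → Frame
  | op : List Frame → Frame → Frame
  | bind : Tm → List Nat → Frame → Frame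

mutual
/-- plug a term into the context represented by a frame -/
def plugF : Frame → Tm → Tm
  | .mt, M => M
  | .arg N R k, M => plugF k (.app M (ren R N))
  | .op S k, M => plugF k (.app (.lam (plugS S (.var (S.length - 1)))) M)
  | .bind N R k, M => plugF k (.app (.lam M) (ren R N))
/-- plug a term into the context represented by a continuation stack -/
def plugS : List Frame → Tm → Tm
  | [], M => M
  | F :: Fs, M => plugS Fs (plugF F M)
end

theorem descend_lam_preserves_phi :
    ∀ (M N : Tm) (R R' : List Nat) (k : Frame) (Ks : List Frame),
      plugS (Frame.arg N R' k :: Ks) (ren R (.lam M)) =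
      plugS (Frame.mt :: Frame.bind N R' k :: Ks) (ren (0 :: R) M) := by
  intro M N R R' k Ks
  simp [ren, plugS, plugF]
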